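/- For every z ∈ Φ_{m,n}, the total weight of perfect matchings of H with pattern z equals (∏_{j=1}^m C(k, z_j)) · Perm(A_z)², where C(k, z_j) is the binomial coefficient (and equals 0 when z_j > k). Moreover, every perfect matching M of H satisfies |S₁(M)| = n, so its pattern lies in Φ_{m,n}. -/

import Mathlib

open scoped Classical

/-- `permA A z` is the permanent of the `n × n` matrix `A_z` formed by stacking `z j`
copies of row `j` of `A` for each `j`: the sum over all bijections `σ` from the rows of
`A_z` (indexed by `Σ j, Fin (z j)`) to the columns of `∏ i, A_{row(σ⁻¹ i), i}`. -/
noncomputable def permA {m n : ℕ} (A : Matrix (Fin m) (Fin n) ℝ) (z : Fin m → ℕ) : ℝ :=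
  ∑ σ : ((j : Fin m) × Fin (z j)) ≃ Fin n, ∏ i : Fin n, A (σ.symm i).1 i

/-- Vertices of the bipartite graph `H`: `(inl i, ℓ)` is the vertex `v_i^{(ℓ+1)} ∈ L_{ℓ+1}`
for `i ∈ [n]`, and `(inr (j,t), ℓ)` is the vertex `u_{j,t}^{(ℓ+1)} ∈ R_{ℓ+1}`. -/
abbrev BSVert (m n k : ℕ) := (Fin n ⊕ (Fin m × Fin k)) × Fin 2

/-- The bipartite graph `H`: for each `ℓ ∈ {1,2}`, an edge `{v_i^{(ℓ)}, u_{j,t}^{(ℓ)}}`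
whenever `A j i ≠ 0`, and a rung edge `{u_{j,t}^{(1)}, u_{j,t}^{(2)}}` for all `(j,t)`. -/
def BSGraph {m n : ℕ} (A : Matrix (Fin m) (Fin n) ℝ) (k : ℕ) :
    SimpleGraph (BSVert m n k) :=
  SimpleGraph.fromRel fun x y =>
    (∃ i j t ℓ, x = (Sum.inl i, ℓ) ∧ y = (Sum.inr (j, t), ℓ) ∧ A j i ≠ 0) ∨
    (∃ j t, x = (Sum.inr (j, t), (0 : Fin 2)) ∧ y = (Sum.inr (j, t), (1 : Fin 2)))

/-- The weight of a pair of endpoints: `A j i` for an edge joining `v_i^{(ℓ)}` and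
`u_{j,t}^{(ℓ)}`, and `1` otherwise (in particular rung edges have weight `1`). -/
def BSpairWt {m n k : ℕ} (A : Matrix (Fin m) (Fin n) ℝ) :
    BSVert m n k → BSVert m n k → ℝ := fun x y =>
  match x.1, y.1 with
  | Sum.inl i, Sum.inr (j, _) => A j i
  | Sum.inr (j, _), Sum.inl i => A j i
  | _, _ => 1

/-- The edge-weight function of `H` on unordered pairs. -/
noncomputable def BSedgeWt {m n k : ℕ} (A : Matrix (Fin m) (Fin n) ℝ) :
    Sym2 (BSVert m n k) → ℝ :=
  Sym2.lift ⟨BSpairWt A, by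
    rintro ⟨x1, x2⟩ ⟨y1, y2⟩
    rcases x1 with i | ⟨j, t⟩ <;> rcases y1 with i' | ⟨j', t'⟩ <;> rfl⟩

/-- The pattern `z ∈ ℕ^m` of a perfect matching `M` of `H`:
`z j = |S₁(M) ∩ ({j} × [k])|`, where `S₁(M)` is the set of `R₁`-vertices matched by `M`
to `L₁`-vertices. -/
noncomputable def BSpattern {m n k : ℕ} (M : Finset (Sym2 (BSVert m n k))) : Fin m → ℕ :=
  fun j => (Finset.univ.filter fun t : Fin k =>
    ∃ i : Fin n, s((Sum.inl i, (0 : Fin 2)), (Sum.inr (j, t), (0 : Fin 2))) ∈ M).card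

/-- `M` is a matching of `G`: a finite set of edges of `G` that are pairwise vertex-disjoint. -/
def IsMatchingSet {α : Type*} (G : SimpleGraph α) (M : Finset (Sym2 α)) : Prop :=
  (∀ e ∈ M, e ∈ G.edgeSet) ∧ ∀ e ∈ M, ∀ f ∈ M, e ≠ f → ∀ v, v ∈ e → v ∉ f

/-- The set of vertices covered by a set of edges `M`. -/
noncomputable def coveredBy {α : Type*} [Fintype α] (M : Finset (Sym2 α)) : Finset α :=
  Finset.univ.filter fun v => ∃ e ∈ M, v ∈ e

/-! A perfect matching of `H` is determined by the two injections `[n] → [m] × [k]` telling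
where the columns of each layer are matched. They have the same image `S`: a vertex
`u_{j,t}^{(ℓ)}` missed by layer `ℓ` can only be covered by its rung, which then also covers
`u_{j,t}^{(3-ℓ)}`. Conversely any two injections with a common image, completed by the rungs
outside `S`, form a perfect matching. Its weight is the product of the two layer weights and its
pattern is the row profile of `S`. Summing the weight of one layer over the injections onto `S`
gives `Perm(A_z)`, and there are `∏ C(k, z_j)` sets `S` with row profile `z`. -/

open Finset

section Slices

variable {α β : Type*} [Fintype α] [Fintype β] [DecidableEq α] [DecidableEq β]

lemma sum_card_slices (S : Finset (α × β)) : ∑ a, #{b | (a, b) ∈ S} = #S := by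
  simpa [Fintype.card_sigma, Fintype.card_subtype] using
    (Fintype.card_congr (Equiv.subtypeProdEquivSigmaSubtype fun a b => (a, b) ∈ S)).symm

lemma card_filter_card_slices_eq (z : α → ℕ) :
    #{S : Finset (α × β) | (fun a => #{b | (a, b) ∈ S}) = z} =
      ∏ a, (Fintype.card β).choose (z a) := by
  simp_rw [← card_univ (α := β), ← card_powersetCard, ← Fintype.card_piFinset]
  refine card_nbij' (fun S a => {b | (a, b) ∈ S})
    (fun T => univ.filter fun p : α × β => p.2 ∈ T p.1) ?_ ?_ ?_ ?_
  · intro S hS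
    simpa [mem_powersetCard, funext_iff] using hS
  · intro T hT
    simpa [mem_powersetCard, funext_iff] using hT
  · intro S _
    ext
    simp
  · intro T _
    ext
    simp

end Slices

lemma sum_injections_onto_eq_sum_equiv {α β M : Type*} [Fintype α] [Fintype β] [DecidableEq α]
    [DecidableEq β] [AddCommMonoid M] (S : Finset β) (w : (α → β) → M) :
    ∑ f with Function.Injective f ∧ univ.image f = S, w f = ∑ e : α ≃ S, w fun a => e a := by
  symm
  refine sum_bij (fun e _ a => e a) (fun e _ => ?_) (fun e _ e' _ h => ?_) (fun f hf => ?_)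
    (fun _ _ => rfl)
  · simp only [mem_filter, mem_univ, true_and]
    refine ⟨Subtype.val_injective.comp e.injective, ?_⟩
    ext b
    simp only [mem_image, mem_univ, true_and]
    exact ⟨by rintro ⟨a, rfl⟩; exact (e a).2, fun hb => ⟨e.symm ⟨b, hb⟩, by simp⟩⟩
  · ext a
    exact congrFun h a
  · simp only [mem_filter, mem_univ, true_and] at hf
    obtain ⟨hinj, rfl⟩ := hf
    refine ⟨.ofBijective (fun a => ⟨f a, mem_image_of_mem f (mem_univ a)⟩) ⟨?_, ?_⟩,
      mem_univ _, rfl⟩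
    · exact fun a a' h => hinj (congrArg Subtype.val h)
    · rintro ⟨b, hb⟩
      obtain ⟨a, -, rfl⟩ := mem_image.1 hb
      exact ⟨a, rfl⟩

section Matchings

variable {α : Type*} {G : SimpleGraph α} {M N : Finset (Sym2 α)}

lemma mem_coveredBy [Fintype α] {v : α} : v ∈ coveredBy M ↔ ∃ e ∈ M, v ∈ e := by
  simp [coveredBy]

lemma IsMatchingSet.eq_of_mem (hM : IsMatchingSet G M) {e f : Sym2 α} (he : e ∈ M)
    (hf : f ∈ M) {v : α} (hve : v ∈ e) (hvf : v ∈ f) : e = f :=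
  by_contra fun h => hM.2 e he f hf h v hve hvf

lemma IsMatchingSet.eq_of_subset [Fintype α] (hN : IsMatchingSet G N) (hMN : M ⊆ N)
    (hM : coveredBy M = univ) : M = N := by
  refine Subset.antisymm hMN fun e he => ?_
  obtain ⟨f, hf, hvf⟩ := mem_coveredBy.1 (hM ▸ mem_univ e.out.1)
  rwa [hN.eq_of_mem he (hMN hf) (Sym2.out_fst_mem e) hvf]

lemma IsMatchingSet.exists_adj_mem [Fintype α] (hM : IsMatchingSet G M)
    (hcov : coveredBy M = univ) (v : α) : ∃ w, G.Adj v w ∧ s(v, w) ∈ M := by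
  obtain ⟨e, he, hv⟩ := mem_coveredBy.1 (hcov ▸ mem_univ v)
  obtain ⟨w, rfl⟩ := Sym2.mem_iff_exists.1 hv
  exact ⟨w, hM.1 _ he, he⟩

end Matchings

variable {m n k : ℕ}

def levelWeight (A : Matrix (Fin m) (Fin n) ℝ) (f : Fin n → Fin m × Fin k) : ℝ :=
  ∏ i, A (f i).1 i

lemma sum_equiv_eq_permA (A : Matrix (Fin m) (Fin n) ℝ) {z : Fin m → ℕ}
    {S : Finset (Fin m × Fin k)} (hS : ∀ j, #{t | (j, t) ∈ S} = z j) :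
    ∑ e : Fin n ≃ S, levelWeight A (fun i => (e i : Fin m × Fin k)) = permA A z := by
  have hcard : ∀ j, Fintype.card {t // (j, t) ∈ S} = z j := fun j => by
    rw [Fintype.card_subtype, hS]
  -- rows of `A_z` ≃ `S`, preserving the row index of `A`
  let eS : ((j : Fin m) × Fin (z j)) ≃ S :=
    (Equiv.sigmaCongrRight fun j => (Fintype.equivFinOfCardEq (hcard j)).symm).trans
      (Equiv.subtypeProdEquivSigmaSubtype fun j t => (j, t) ∈ S).symm
  exact (Fintype.sum_equiv ((Equiv.symmEquiv _ _).trans (Equiv.equivCongr (.refl _) eS)) _ _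
    fun σ => rfl).symm

variable {A : Matrix (Fin m) (Fin n) ℝ}

lemma bsGraph_adj_inl_iff {i : Fin n} {ℓ : Fin 2} {w : BSVert m n k} :
    (BSGraph A k).Adj (.inl i, ℓ) w ↔ ∃ q : Fin m × Fin k, w = (.inr q, ℓ) ∧ A q.1 i ≠ 0 := by
  simp only [BSGraph, SimpleGraph.fromRel_adj]
  constructor
  · rintro ⟨-, (⟨i', j, t, ℓ', h, rfl, hA⟩ | ⟨j, t, h, -⟩) |
      (⟨i', j, t, ℓ', -, h, -⟩ | ⟨j, t, -, h⟩)⟩ <;>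
      simp only [Prod.mk.injEq, Sum.inl.injEq, reduceCtorEq, false_and] at h
    obtain ⟨rfl, rfl⟩ := h
    exact ⟨(j, t), rfl, hA⟩
  · rintro ⟨q, rfl, hA⟩
    exact ⟨by simp, .inl (.inl ⟨i, q.1, q.2, ℓ, rfl, rfl, hA⟩)⟩

lemma bsGraph_adj_inr_iff {q : Fin m × Fin k} {ℓ : Fin 2} {w : BSVert m n k} :
    (BSGraph A k).Adj (.inr q, ℓ) w ↔
      (∃ i, w = (.inl i, ℓ) ∧ A q.1 i ≠ 0) ∨ w = (.inr q, ℓ + 1) := by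
  simp only [BSGraph, SimpleGraph.fromRel_adj]
  constructor
  · rintro ⟨-, (⟨i', j, t, ℓ', h, -, -⟩ | ⟨j, t, h, rfl⟩) |
      (⟨i', j, t, ℓ', rfl, h, hA⟩ | ⟨j, t, rfl, h⟩)⟩ <;>
      simp only [Prod.mk.injEq, Sum.inr.injEq, reduceCtorEq, false_and] at h
    · obtain ⟨rfl, rfl⟩ := h
      exact .inr rfl
    · obtain ⟨rfl, rfl⟩ := h
      exact .inl ⟨i', rfl, hA⟩
    · obtain ⟨rfl, rfl⟩ := h
      exact .inr rfl
  · rintro (⟨i, rfl, hA⟩ | rfl)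
    · exact ⟨by simp, .inr (.inl ⟨i, q.1, q.2, ℓ, rfl, rfl, hA⟩)⟩
    · refine ⟨by simp, ?_⟩
      fin_cases ℓ
      · exact .inl (.inr ⟨q.1, q.2, rfl, rfl⟩)
      · exact .inr (.inr ⟨q.1, q.2, rfl, rfl⟩)

lemma bsEdgeWt_level_edge (i : Fin n) (q : Fin m × Fin k) (ℓ : Fin 2) :
    BSedgeWt A s((.inl i, ℓ), (.inr q, ℓ)) = A q.1 i := rfl

lemma bsEdgeWt_rung (q : Fin m × Fin k) :
    BSedgeWt A (s((.inr q, 0), (.inr q, 1)) : Sym2 (BSVert m n k)) = 1 := rfl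

/-- Layer `ℓ` matches `v_i^{(ℓ)}` to `u_{F ℓ i}^{(ℓ)}`; the `R`-vertices missed by both layers are
matched by their rungs. -/
def toMatching (F : Fin 2 → Fin n → Fin m × Fin k) : Finset (Sym2 (BSVert m n k)) :=
  univ.image (fun p : Fin 2 × Fin n => s((.inl p.2, p.1), (.inr (F p.1 p.2), p.1))) ∪
    ({q | ∀ ℓ i, F ℓ i ≠ q} : Finset _).image fun q => s((.inr q, 0), (.inr q, 1))

variable {F : Fin 2 → Fin n → Fin m × Fin k}

lemma mem_toMatching {e : Sym2 (BSVert m n k)} :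
    e ∈ toMatching F ↔ (∃ ℓ i, s((.inl i, ℓ), (.inr (F ℓ i), ℓ)) = e) ∨
      ∃ q, (∀ ℓ i, F ℓ i ≠ q) ∧ s((.inr q, 0), (.inr q, 1)) = e := by
  simp [toMatching]

lemma level_edge_mem_toMatching_iff {i : Fin n} {q : Fin m × Fin k} {ℓ : Fin 2} :
    s((.inl i, ℓ), (.inr q, ℓ)) ∈ toMatching F ↔ F ℓ i = q := by
  refine ⟨fun h => ?_, fun h => mem_toMatching.2 (.inl ⟨ℓ, i, h ▸ rfl⟩)⟩
  rcases mem_toMatching.1 h with ⟨ℓ', i', h⟩ | ⟨q', -, h⟩ <;> simp at h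
  grind

lemma toMatching_injective : Function.Injective (toMatching (m := m) (n := n) (k := k)) :=
  fun _ _ h => funext₂ fun _ _ =>
    level_edge_mem_toMatching_iff.1 (h ▸ level_edge_mem_toMatching_iff.2 rfl)

lemma bsPattern_toMatching (j : Fin m) :
    BSpattern (toMatching F) j = #{t | (j, t) ∈ univ.image (F 0)} := by
  simp [BSpattern, level_edge_mem_toMatching_iff]

lemma prod_bsEdgeWt_toMatching :
    ∏ e ∈ toMatching F, BSedgeWt A e = ∏ ℓ, levelWeight A (F ℓ) := by
  rw [toMatching, prod_union, prod_image, prod_image]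
  · simp [bsEdgeWt_level_edge, bsEdgeWt_rung, Fintype.prod_prod_type, levelWeight]
  · intro q _ q' _ h
    simpa using h
  · intro p _ p' _ h
    simp at h
    grind
  · simp only [disjoint_left, mem_image]
    rintro _ ⟨p, -, rfl⟩ ⟨q, -, h⟩
    simp at h

lemma isMatchingSet_toMatching (hinj : ∀ ℓ, Function.Injective (F ℓ))
    (hA : ∀ ℓ i, A (F ℓ i).1 i ≠ 0) : IsMatchingSet (BSGraph A k) (toMatching F) := by
  refine ⟨fun e he => ?_, fun e he f hf hef v hve hvf => ?_⟩
  · rcases mem_toMatching.1 he with ⟨ℓ, i, rfl⟩ | ⟨q, -, rfl⟩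
    · exact bsGraph_adj_inl_iff.2 ⟨_, rfl, hA ℓ i⟩
    · exact bsGraph_adj_inr_iff.2 (.inr rfl)
  · -- `v` determines its edge: `v_i^{(ℓ)}` directly, `u_q^{(ℓ)}` by injectivity of `F ℓ`,
    -- and a rung never meets an edge of the layers
    rcases mem_toMatching.1 he with ⟨ℓ, i, rfl⟩ | ⟨q, hq, rfl⟩ <;>
    rcases mem_toMatching.1 hf with ⟨ℓ', i', rfl⟩ | ⟨q', hq', rfl⟩ <;>
    simp at hve hvf hef <;> grind [Function.Injective]

lemma coveredBy_toMatching {S : Finset (Fin m × Fin k)} (hS : ∀ ℓ, univ.image (F ℓ) = S) :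
    coveredBy (toMatching F) = univ := by
  refine eq_univ_of_forall fun v => mem_coveredBy.2 ?_
  obtain ⟨i | q, ℓ⟩ := v
  · exact ⟨_, level_edge_mem_toMatching_iff.2 rfl, Sym2.mem_mk_left _ _⟩
  by_cases h : ∃ i, F ℓ i = q
  · obtain ⟨i, rfl⟩ := h
    exact ⟨_, level_edge_mem_toMatching_iff.2 rfl, Sym2.mem_mk_right _ _⟩
  · have hq : ∀ ℓ' i, F ℓ' i ≠ q := by
      rintro ℓ' i rfl
      have : F ℓ' i ∈ univ.image (F ℓ) := hS ℓ ▸ hS ℓ' ▸ mem_image_of_mem _ (mem_univ i)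
      exact h (by simpa using this)
    refine ⟨_, mem_toMatching.2 (.inr ⟨q, hq, rfl⟩), ?_⟩
    fin_cases ℓ <;> simp

lemma rung_mem_iff_forall_ne {M : Finset (Sym2 (BSVert m n k))}
    (hM : IsMatchingSet (BSGraph A k) M) (hcov : coveredBy M = univ)
    (hF : ∀ ℓ i, s((.inl i, ℓ), (.inr (F ℓ i), ℓ)) ∈ M) (ℓ : Fin 2) (q : Fin m × Fin k) :
    s((.inr q, 0), (.inr q, 1)) ∈ M ↔ ∀ i, F ℓ i ≠ q := by
  constructor
  · rintro h i rfl
    have := hM.eq_of_mem h (hF ℓ i) (v := (.inr (F ℓ i), ℓ)) (by fin_cases ℓ <;> simp)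
      (Sym2.mem_mk_right _ _)
    simp at this
  · intro h
    obtain ⟨w, hw, he⟩ := hM.exists_adj_mem hcov (.inr q, ℓ)
    rcases bsGraph_adj_inr_iff.1 hw with ⟨i, rfl, -⟩ | rfl
    · have := hM.eq_of_mem he (hF ℓ i) (Sym2.mem_mk_right _ _) (Sym2.mem_mk_left _ _)
      simp at this
      grind
    · fin_cases ℓ
      · exact he
      · rwa [Sym2.eq_swap] at he

lemma exists_eq_toMatching {M : Finset (Sym2 (BSVert m n k))}
    (hM : IsMatchingSet (BSGraph A k) M) (hcov : coveredBy M = univ) :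
    ∃ F : Fin 2 → Fin n → Fin m × Fin k, (∀ ℓ, Function.Injective (F ℓ)) ∧
      (∀ ℓ, univ.image (F ℓ) = univ.image (F 0)) ∧ M = toMatching F := by
  have level_partner : ∀ ℓ i, ∃ q, s((.inl i, ℓ), (.inr q, ℓ)) ∈ M := fun ℓ i => by
    obtain ⟨w, hw, he⟩ := hM.exists_adj_mem hcov (.inl i, ℓ)
    obtain ⟨q, rfl, -⟩ := bsGraph_adj_inl_iff.1 hw
    exact ⟨q, he⟩
  choose F hF using level_partner
  have hinj : ∀ ℓ, Function.Injective (F ℓ) := fun ℓ i i' h => by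
    have := hM.eq_of_mem (hF ℓ i) (h ▸ hF ℓ i') (Sym2.mem_mk_right _ _) (Sym2.mem_mk_right _ _)
    simpa using this
  have rung_mem_iff := rung_mem_iff_forall_ne hM hcov hF
  have himg : ∀ ℓ, univ.image (F ℓ) = univ.image (F 0) := fun ℓ => by
    ext q
    simp only [mem_image, mem_univ, true_and]
    rw [← not_iff_not]
    simpa using (rung_mem_iff ℓ q).symm.trans (rung_mem_iff 0 q)
  refine ⟨F, hinj, himg, (hM.eq_of_subset (fun e he => ?_) (coveredBy_toMatching himg)).symm⟩
  rcases mem_toMatching.1 he with ⟨ℓ, i, rfl⟩ | ⟨q, hq, rfl⟩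
  · exact hF ℓ i
  · exact (rung_mem_iff 0 q).2 (hq 0)

lemma sum_weight_perfectMatchings_eq (z : Fin m → ℕ) :
    ∑ M with IsMatchingSet (BSGraph A k) M ∧ coveredBy M = univ ∧ BSpattern M = z,
        ∏ e ∈ M, BSedgeWt A e =
      ∑ S with (fun j => #{t | (j, t) ∈ S}) = z,
        ∑ F ∈ Fintype.piFinset fun _ : Fin 2 =>
            ({f : Fin n → Fin m × Fin k | Function.Injective f ∧ univ.image f = S} : Finset _),
          ∏ ℓ, levelWeight A (F ℓ) := by
  rw [sum_sigma']
  symm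
  refine sum_bij_ne_zero (fun p _ _ => toMatching p.2) ?_ ?_ ?_
    fun _ _ _ => prod_bsEdgeWt_toMatching.symm
  · rintro ⟨S, F⟩ hp hw
    simp only [mem_sigma, mem_filter, mem_univ, true_and, Fintype.mem_piFinset] at hp ⊢
    obtain ⟨hz, hF⟩ := hp
    have hA : ∀ ℓ i, A (F ℓ i).1 i ≠ 0 := fun ℓ i =>
      prod_ne_zero_iff.1 (prod_ne_zero_iff.1 hw ℓ (mem_univ _)) i (mem_univ _)
    refine ⟨isMatchingSet_toMatching (fun ℓ => (hF ℓ).1) hA,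
      coveredBy_toMatching (fun ℓ => (hF ℓ).2), ?_⟩
    rw [← hz, ← (hF 0).2]
    exact funext fun j => bsPattern_toMatching j
  · rintro ⟨S, F⟩ hp - ⟨S', F'⟩ hp' - h
    obtain rfl := toMatching_injective h
    simp only [mem_sigma, mem_filter, mem_univ, true_and, Fintype.mem_piFinset] at hp hp'
    rw [← (hp.2 0).2, ← (hp'.2 0).2]
  · intro M hM hw
    simp only [mem_filter, mem_univ, true_and] at hM
    obtain ⟨F, hinj, himg, rfl⟩ := exists_eq_toMatching hM.1 hM.2.1
    refine ⟨⟨univ.image (F 0), F⟩, ?_, prod_bsEdgeWt_toMatching ▸ hw, rfl⟩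
    simp only [mem_sigma, mem_filter, mem_univ, true_and, Fintype.mem_piFinset]
    refine ⟨?_, fun ℓ => ⟨hinj ℓ, himg ℓ⟩⟩
    rw [← hM.2.2]
    exact funext fun j => (bsPattern_toMatching j).symm

theorem stmt11_general {m n : ℕ} (A : Matrix (Fin m) (Fin n) ℝ) (k : ℕ) :
    (∀ z : Fin m → ℕ, (∑ j, z j) = n →
      ∑ M ∈ Finset.univ.filter (fun M : Finset (Sym2 (BSVert m n k)) =>
          IsMatchingSet (BSGraph A k) M ∧ coveredBy M = Finset.univ ∧ BSpattern M = z),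
        ∏ e ∈ M, BSedgeWt A e
      = (∏ j, (k.choose (z j) : ℝ)) * permA A z ^ 2) ∧
    (∀ M : Finset (Sym2 (BSVert m n k)),
      IsMatchingSet (BSGraph A k) M → coveredBy M = Finset.univ →
        ∑ j, BSpattern M j = n) := by
  refine ⟨fun z _ => ?_, fun M hM hcov => ?_⟩
  · rw [sum_weight_perfectMatchings_eq]
    calc _ = ∑ S with (fun j => #{t | (j, t) ∈ S}) = z, permA A z ^ 2 := by
          refine sum_congr rfl fun S hS => ?_
          rw [← prod_univ_sum, sum_injections_onto_eq_sum_equiv,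
            sum_equiv_eq_permA A (congrFun (mem_filter.1 hS).2), Fin.prod_const]
      _ = _ := by simp [card_filter_card_slices_eq]
  · obtain ⟨F, hinj, -, rfl⟩ := exists_eq_toMatching hM hcov
    simp_rw [bsPattern_toMatching, sum_card_slices, card_image_of_injective _ (hinj 0), card_univ,
      Fintype.card_fin]

/-- For every `z ∈ Φ_{m,n}`, the total weight of perfect matchings of `H` with pattern
`z` equals `(∏_{j=1}^m C(k, z_j)) · Perm(A_z)²`. Moreover, every perfect matching `M` of
`H` satisfies `|S₁(M)| = n` (its pattern lies in `Φ_{m,n}`). -/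
theorem stmt11 {m n : ℕ} (hn : 1 ≤ n) (hnm : n ≤ m) (A : Matrix (Fin m) (Fin n) ℝ)
    (hA : ∀ j i, 0 ≤ A j i) (k : ℕ) (hk : 1 ≤ k) :
    (∀ z : Fin m → ℕ, (∑ j, z j) = n →
      ∑ M ∈ Finset.univ.filter (fun M : Finset (Sym2 (BSVert m n k)) =>
          IsMatchingSet (BSGraph A k) M ∧ coveredBy M = Finset.univ ∧ BSpattern M = z),
        ∏ e ∈ M, BSedgeWt A e
      = (∏ j, (k.choose (z j) : ℝ)) * permA A z ^ 2) ∧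
    (∀ M : Finset (Sym2 (BSVert m n k)),
      IsMatchingSet (BSGraph A k) M → coveredBy M = Finset.univ →
        ∑ j, BSpattern M j = n) :=
  stmt11_general A k
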